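/- arXiv:1111.1362 — 2 statements merged into one kernel-verified Lean document; each statement's English description precedes it below -/
import Mathlib

section
/- Let N ⊂ M be a finite index II₁ subfactor with basis B = {b} (so Σ_b b e₁ b* = 1). For x ∈ N′ ∩ M_k and elements y₁,…,y_{k+1} ∈ M, the rotation ρ_k(x) = Σ_b R_{b*}(L_{b*})* x satisfies ⟨ρ_k(x), y₁ ⊗_N ⋯ ⊗_N y_{k+1}⟩ = ⟨x, y_{k+1} ⊗_N y₁ ⊗_N ⋯ ⊗_N y_k⟩, where the inner product is in L²(M_k, tr). -/
/-!
Pairing with an elementary tensor, `(R_{b*})*` peels off the last leg `y_{k+1}` as the right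
action of `E(y_{k+1} b) ∈ N` on `K'`, which `L_{b*}` carries to the right action on `K`. Since
`x` is `N`-central, that right action can be moved to the left, where it multiplies the new
first leg `b*` into `E(y_{k+1} b) b*`. Summing over the basis turns this first leg back into
`y_{k+1}`, giving the rotated tensor.
-/

open ContinuousLinearMap
open scoped InnerProductSpace

theorem Fin.cons_last_init_eq_comp_sub_one {α : Type*} {k : ℕ} (y : Fin (k + 1) → α) :
    (Fin.cons (y (Fin.last k)) (Fin.init y) : Fin (k + 1) → α) = fun j => y (j - 1) := by
  funext j
  have h := congrFun (Fin.snoc_eq_cons_rotate (Fin.init y) (y (Fin.last k))) ((finRotate _).symm j)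
  simpa [Fin.snoc_init_self] using h.symm

theorem inner_rightAct_eq_inner_leftAct {A K : Type*} [Star A]
    [NormedAddCommGroup K] [InnerProductSpace ℂ K] [CompleteSpace K] {lK rK : A → K →L[ℂ] K}
    (hlKadj : ∀ a, adjoint (lK a) = lK (star a)) (hrKadj : ∀ a, adjoint (rK a) = rK (star a))
    {x : K} {m : A} (hm : lK (star m) x = rK (star m) x) (ξ : K) :
    ⟪x, rK m ξ⟫_ℂ = ⟪x, lK m ξ⟫_ℂ := by
  rw [← adjoint_inner_left, hrKadj, ← hm, ← hlKadj, adjoint_inner_left]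

theorem inner_creation_adjoint_apply {A K K' : Type*} [Mul A] [Star A]
    [NormedAddCommGroup K] [InnerProductSpace ℂ K] [CompleteSpace K]
    [NormedAddCommGroup K'] [InnerProductSpace ℂ K'] [CompleteSpace K'] {k : ℕ}
    {E : A → A} {t : (Fin (k + 1) → A) → K} {t' : (Fin k → A) → K'}
    {L R : A → K' →L[ℂ] K} {ract : A → K' →L[ℂ] K'} {rK : A → K →L[ℂ] K}
    (hRadj : ∀ (a : A) (y : Fin (k + 1) → A),
      adjoint (R a) (t y) = ract (E (y (Fin.last k) * star a)) (t' (Fin.init y)))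
    (hLr : ∀ (a m : A) (ξ : K'), L a (ract m ξ) = rK m (L a ξ))
    (c : A) (x : K) (y : Fin (k + 1) → A) :
    ⟪R c (adjoint (L c) x), t y⟫_ℂ
      = ⟪x, rK (E (y (Fin.last k) * star c)) (L c (t' (Fin.init y)))⟫_ℂ := by
  rw [← adjoint_inner_right, hRadj, adjoint_inner_left, hLr]

theorem rotation_inner_product_identity_general
    (A : Type) [Ring A] [StarRing A]
    (N : Set A) (E : A → A) (hE_mem : ∀ a, E a ∈ N)
    (hE_star : ∀ a, star (E a) = E (star a))
    (k n : ℕ)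
    (K : Type) [NormedAddCommGroup K] [InnerProductSpace ℂ K] [CompleteSpace K]
    (K' : Type) [NormedAddCommGroup K'] [InnerProductSpace ℂ K'] [CompleteSpace K']
    (t : (Fin (k + 1) → A) → K) (t' : (Fin k → A) → K')
    (L R : A → (K' →L[ℂ] K))
    (ract : A → (K' →L[ℂ] K'))
    (lK rK : A → (K →L[ℂ] K))
    -- creation operators: L_a ξ = â ⊗_N ξ, R_a ξ = ξ ⊗_N â
    (hL : ∀ (a : A) (y : Fin k → A), L a (t' y) = t (Fin.cons a y))
    -- adjoints: (L_a)* (b̂ ⊗ η) = E(a* b) η, (R_a)* (η ⊗ b̂) = η E(b a*)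
    (hRadj : ∀ (a : A) (y : Fin (k + 1) → A),
      ContinuousLinearMap.adjoint (R a) (t y)
        = ract (E (y (Fin.last k) * star a)) (t' (Fin.init y)))
    -- compatibility of the actions with the tensor maps:
    (hLr : ∀ (a m : A) (ξ : K'), L a (ract m ξ) = rK m (L a ξ))
    (hlKt : ∀ (m : A) (y : Fin (k + 1) → A),
      lK m (t y) = t (Function.update y 0 (m * y 0)))
    (hlKadj : ∀ a : A, ContinuousLinearMap.adjoint (lK a) = lK (star a))
    (hrKadj : ∀ a : A, ContinuousLinearMap.adjoint (rK a) = rK (star a))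
    -- the basis B for M over N: Σ_b b E(b* m) = m, at the level of tensors
    (B : Fin n → A)
    (hbasis : ∀ (m : A) (w : Fin k → A),
      (∑ i, t (Fin.cons (E (m * B i) * star (B i)) w)) = t (Fin.cons m w))
    -- x an N-central vector (x ∈ N' ∩ M_k ⊆ L²(M_k)):
    (x : K) (hx : ∀ a ∈ N, lK a x = rK a x) :
    ∀ y : Fin (k + 1) → A,
      (inner ℂ (∑ i, R (star (B i)) (ContinuousLinearMap.adjoint (L (star (B i))) x))
        (t y) : ℂ)
      = inner ℂ x (t fun j => y (j - 1)) := by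
  intro y
  have hterm : ∀ i, ⟪R (star (B i)) (adjoint (L (star (B i))) x), t y⟫_ℂ
      = ⟪x, t (Fin.cons (E (y (Fin.last k) * B i) * star (B i)) (Fin.init y))⟫_ℂ := by
    intro i
    have hcentral : lK (star (E (y (Fin.last k) * B i))) x
        = rK (star (E (y (Fin.last k) * B i))) x :=
      hx _ (hE_star _ ▸ hE_mem _)
    rw [inner_creation_adjoint_apply hRadj hLr, star_star,
      inner_rightAct_eq_inner_leftAct hlKadj hrKadj hcentral, hL, hlKt, Fin.update_cons_zero,
      Fin.cons_zero]
  calc ⟪∑ i, R (star (B i)) (adjoint (L (star (B i))) x), t y⟫_ℂ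
      = ⟪x, ∑ i, t (Fin.cons (E (y (Fin.last k) * B i) * star (B i)) (Fin.init y))⟫_ℂ := by
        simp only [sum_inner, hterm, inner_sum]
    _ = ⟪x, t fun j => y (j - 1)⟫_ℂ := by
        rw [hbasis, Fin.cons_last_init_eq_comp_sub_one]

theorem rotation_inner_product_identity
    (A : Type) [Ring A] [StarRing A]
    (N : Set A) (E : A → A) (hE_mem : ∀ a, E a ∈ N)
    (hE_star : ∀ a, star (E a) = E (star a))
    (k n : ℕ)
    (K : Type) [NormedAddCommGroup K] [InnerProductSpace ℂ K] [CompleteSpace K]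
    (K' : Type) [NormedAddCommGroup K'] [InnerProductSpace ℂ K'] [CompleteSpace K']
    (t : (Fin (k + 1) → A) → K) (t' : (Fin k → A) → K')
    (L R : A → (K' →L[ℂ] K))
    (lact ract : A → (K' →L[ℂ] K'))
    (lK rK : A → (K →L[ℂ] K))
    -- creation operators: L_a ξ = â ⊗_N ξ, R_a ξ = ξ ⊗_N â
    (hL : ∀ (a : A) (y : Fin k → A), L a (t' y) = t (Fin.cons a y))
    (hR : ∀ (a : A) (y : Fin k → A), R a (t' y) = t (Fin.snoc y a))
    -- adjoints: (L_a)* (b̂ ⊗ η) = E(a* b) η, (R_a)* (η ⊗ b̂) = η E(b a*)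
    (hLadj : ∀ (a b : A) (y : Fin k → A),
      ContinuousLinearMap.adjoint (L a) (t (Fin.cons b y)) = lact (E (star a * b)) (t' y))
    (hRadj : ∀ (a : A) (y : Fin (k + 1) → A),
      ContinuousLinearMap.adjoint (R a) (t y)
        = ract (E (y (Fin.last k) * star a)) (t' (Fin.init y)))
    -- compatibility of the actions with the tensor maps:
    (hLr : ∀ (a m : A) (ξ : K'), L a (ract m ξ) = rK m (L a ξ))
    (hlKt : ∀ (m : A) (y : Fin (k + 1) → A),
      lK m (t y) = t (Function.update y 0 (m * y 0)))
    (hrKt : ∀ (m : A) (y : Fin (k + 1) → A),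
      rK m (t y) = t (Function.update y (Fin.last k) (y (Fin.last k) * m)))
    (hlKadj : ∀ a : A, ContinuousLinearMap.adjoint (lK a) = lK (star a))
    (hrKadj : ∀ a : A, ContinuousLinearMap.adjoint (rK a) = rK (star a))
    -- the basis B for M over N: Σ_b b E(b* m) = m, at the level of tensors
    (B : Fin n → A)
    (hbasis : ∀ (m : A) (w : Fin k → A),
      (∑ i, t (Fin.cons (E (m * B i) * star (B i)) w)) = t (Fin.cons m w))
    -- x an N-central vector (x ∈ N' ∩ M_k ⊆ L²(M_k)):
    (x : K) (hx : ∀ a ∈ N, lK a x = rK a x) :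
    ∀ y : Fin (k + 1) → A,
      (inner ℂ (∑ i, R (star (B i)) (ContinuousLinearMap.adjoint (L (star (B i))) x))
        (t y) : ℂ)
      = inner ℂ x (t fun j => y (j - 1)) :=
  rotation_inner_product_identity_general A N E hE_mem hE_star k n K K' t t' L R ract lK rK hL hRadj
    hLr hlKt hlKadj hrKadj B hbasis x hx
end

section
/- Let N ⊂ M be a finite index II₁ subfactor. The rotation ρ_k on N′ ∩ M_k, defined by ⟨ρ_k(x), y₁ ⊗_N ⋯ ⊗_N y_{k+1}⟩ = ⟨x, y_{k+1} ⊗_N y₁ ⊗_N ⋯ ⊗_N y_k⟩, satisfies (ρ_k)^{k+1} = id. -/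
/-!
Iterating the defining identity `k + 1` times gives `⟪ρ^(k+1) x, t y⟫ = ⟪x, t (y ∘ σ^(k+1))⟫`
with `σ j = j - 1` the cyclic shift of `Fin (k + 1)`. Since `σ` has order dividing `k + 1`,
`ρ^(k+1) x` and `x` have the same inner products with every elementary tensor `t y`, and
these span a dense subspace.
-/

open Submodule Set

section InnerProduct

variable {𝕜 E : Type*} [RCLike 𝕜] [NormedAddCommGroup E] [InnerProductSpace 𝕜 E]

theorem Dense.eq_of_inner_left_of_dense_span {ι : Type*} {t : ι → E} {x y : E}
    (hdense : Dense (span 𝕜 (range t) : Set E)) (h : ∀ i, inner 𝕜 x (t i) = inner 𝕜 y (t i)) :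
    x = y :=
  hdense.eq_of_inner_left 𝕜 fun _ hv ↦ span_induction (forall_mem_range.2 h)
    (by simp) (fun _ _ _ _ ha hb ↦ by simp only [inner_add_right, ha, hb])
    (fun c _ _ ha ↦ by simp only [inner_smul_right, ha]) hv

variable {α : Type*} {t : α → E} {f : α → α} {S : Set E} {ρ : E →L[𝕜] E}

theorem inner_pow_apply_eq_inner_iterate (hmaps : MapsTo ρ S S)
    (hrot : ∀ x ∈ S, ∀ y, inner 𝕜 (ρ x) (t y) = inner 𝕜 x (t (f y))) (n : ℕ) :
    ∀ x ∈ S, ∀ y, inner 𝕜 ((ρ ^ n) x) (t y) = inner 𝕜 x (t (f^[n] y)) := by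
  induction n with
  | zero => simp
  | succ n ih =>
    intro x hx y
    rw [pow_succ, mul_apply_eq_comp, ih _ (hmaps hx), hrot x hx,
      Function.iterate_succ_apply']

theorem pow_apply_eq_self_of_iterate_eq_id (hdense : Dense (span 𝕜 (range t) : Set E))
    (hmaps : MapsTo ρ S S) (hrot : ∀ x ∈ S, ∀ y, inner 𝕜 (ρ x) (t y) = inner 𝕜 x (t (f y)))
    {n : ℕ} (hf : f^[n] = id) {x : E} (hx : x ∈ S) : (ρ ^ n) x = x :=
  hdense.eq_of_inner_left_of_dense_span fun y ↦ by
    rw [inner_pow_apply_eq_inner_iterate hmaps hrot n x hx, hf, id]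

end InnerProduct

theorem Function.iterate_comp_right_apply {ι β : Type*} (g : ι → ι) (y : ι → β) (n : ℕ) :
    (· ∘ g)^[n] y = y ∘ g^[n] := by
  induction n with
  | zero => rfl
  | succ n ih => rw [Function.iterate_succ_apply', ih, Function.iterate_succ]; rfl

theorem sub_right_iterate_card {G : Type*} [AddGroup G] [Finite G] (a : G) :
    (· - a)^[Nat.card G] = id := by
  simp_rw [sub_eq_add_neg, add_right_iterate, card_nsmul_eq_zero', add_zero]
  rfl

theorem rotation_has_period_k_plus_one_general
    (A : Type) (k : ℕ)
    (K : Type) [NormedAddCommGroup K] [InnerProductSpace ℂ K]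
    (t : (Fin (k + 1) → A) → K)
    (hdense : Dense ((Submodule.span ℂ (Set.range t) : Submodule ℂ K) : Set K))
    (S : Set K) (ρ : K →L[ℂ] K)
    (hmaps : ∀ x ∈ S, ρ x ∈ S)
    (hrot : ∀ x ∈ S, ∀ y : Fin (k + 1) → A,
      (inner ℂ (ρ x) (t y) : ℂ) = inner ℂ x (t fun j => y (j - 1))) :
    ∀ x ∈ S, (ρ ^ (k + 1)) x = x := by
  have hshift : (fun y : Fin (k + 1) → A ↦ y ∘ (· - 1))^[k + 1] = id := by
    have hσ := sub_right_iterate_card (1 : Fin (k + 1))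
    rw [Nat.card_fin] at hσ
    funext y
    rw [Function.iterate_comp_right_apply, hσ]
    rfl
  exact fun x hx ↦ pow_apply_eq_self_of_iterate_eq_id hdense hmaps hrot hshift hx

theorem rotation_has_period_k_plus_one
    (A : Type) (k : ℕ)
    (K : Type) [NormedAddCommGroup K] [InnerProductSpace ℂ K] [CompleteSpace K]
    (t : (Fin (k + 1) → A) → K)
    (hdense : Dense ((Submodule.span ℂ (Set.range t) : Submodule ℂ K) : Set K))
    (S : Set K) (ρ : K →L[ℂ] K)
    (hmaps : ∀ x ∈ S, ρ x ∈ S)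
    (hrot : ∀ x ∈ S, ∀ y : Fin (k + 1) → A,
      (inner ℂ (ρ x) (t y) : ℂ) = inner ℂ x (t fun j => y (j - 1))) :
    ∀ x ∈ S, (ρ ^ (k + 1)) x = x :=
  rotation_has_period_k_plus_one_general A k K t hdense S ρ hmaps hrot
end
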